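/- For every real ε with 0 < ε < 1/2 there exist an integer m ≥ 3 and a real k > 0 such that the following holds for every b : ℕ → {0,1}: define α_m(j) = ∑_{i=0}^{∞} b(j+i)/m^{i+1}; then for every l ∈ ℕ and every guess sequence g : ℕ → {0,1}, with reals defined by x₀ = α_m(0) and x_{j+1} = m·x_j − g(j), one has: if g(j) = b(j) for all j ≤ l then 1/(1 + 2k|x_{l+1}|) ≥ 1 − ε, and if g(j) ≠ b(j) for some j ≤ l then 1/(1 + 2k|x_{l+1}|) ≤ ε. -/

import Mathlib

/-- `alphaBase m b j = ∑_{i=0}^∞ b(j+i) / m^(i+1)`. -/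
noncomputable def alphaBase (m : ℕ) (b : ℕ → Fin 2) (j : ℕ) : ℝ :=
  ∑' i : ℕ, ((b (j + i) : ℕ) : ℝ) / (m : ℝ) ^ (i + 1)

/-!
While every guess is right, `x n` is the tail `alphaBase m b n ∈ [0, 1/(m-1)]`, which is small.
The first wrong guess shifts `x` by `±1`, making `|x| ≥ 1 - 1/(m-1) ≥ 1/2`, and since
`m/2 - 1 ≥ 1/2` for `m ≥ 3` the map `x ↦ m x - g` keeps `|x| ≥ 1/2` from then on.
With `k = (1 - ε)/ε` the rejecting bound `1/(1 + k) = ε` is exact, and taking `m` large makes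
`2k/(m-1)` small enough for the accepting bound.
-/

lemma natCast_fin_two_le_one (d : Fin 2) : ((d : ℕ) : ℝ) ≤ 1 := by
  fin_cases d <;> simp

lemma abs_natCast_fin_two_sub_eq_one {d e : Fin 2} (h : d ≠ e) :
    |((d : ℕ) : ℝ) - ((e : ℕ) : ℝ)| = 1 := by
  fin_cases d <;> fin_cases e <;> simp_all

lemma hasSum_one_div_pow_succ {r : ℝ} (hr : 1 < r) :
    HasSum (fun i : ℕ => 1 / r ^ (i + 1)) (1 / (r - 1)) := by
  have hr0 : 0 < r := by linarith
  have hsum := (hasSum_geometric_of_lt_one (inv_nonneg.2 hr0.le)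
    (inv_lt_one_of_one_lt₀ hr)).mul_left r⁻¹
  rw [show 1 / (r - 1) = r⁻¹ * (1 - r⁻¹)⁻¹ by field_simp [(sub_pos.2 hr).ne']]
  have hterm : (fun i : ℕ => 1 / r ^ (i + 1)) = fun i => r⁻¹ * r⁻¹ ^ i := by
    ext i
    rw [pow_succ', inv_pow, one_div, mul_inv]
  rwa [hterm]

section alphaBase

variable {m : ℕ} (b : ℕ → Fin 2) (j : ℕ)

lemma alphaBase_term_le (i : ℕ) :
    ((b (j + i) : ℕ) : ℝ) / (m : ℝ) ^ (i + 1) ≤ 1 / (m : ℝ) ^ (i + 1) :=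
  div_le_div_of_nonneg_right (natCast_fin_two_le_one _) (by positivity)

lemma alphaBase_summable (hm : 1 < m) :
    Summable (fun i : ℕ => ((b (j + i) : ℕ) : ℝ) / (m : ℝ) ^ (i + 1)) :=
  (hasSum_one_div_pow_succ (Nat.one_lt_cast.2 hm)).summable.of_nonneg_of_le
    (fun _ => by positivity) (alphaBase_term_le b j)

lemma alphaBase_nonneg : 0 ≤ alphaBase m b j :=
  tsum_nonneg fun _ => by positivity

lemma alphaBase_le (hm : 1 < m) : alphaBase m b j ≤ 1 / ((m : ℝ) - 1) :=
  hasSum_le (alphaBase_term_le b j) (alphaBase_summable b j hm).hasSum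
    (hasSum_one_div_pow_succ (Nat.one_lt_cast.2 hm))

lemma mul_alphaBase (hm : 1 < m) :
    (m : ℝ) * alphaBase m b j = ((b j : ℕ) : ℝ) + alphaBase m b (j + 1) := by
  have hm0 : (m : ℝ) ≠ 0 := by positivity
  have htail : ∑' i : ℕ, ((b (j + (i + 1)) : ℕ) : ℝ) / (m : ℝ) ^ (i + 1 + 1)
      = (m : ℝ)⁻¹ * alphaBase m b (j + 1) := by
    rw [alphaBase, ← tsum_mul_left]
    refine tsum_congr fun i => ?_
    rw [← add_assoc, add_right_comm j, pow_succ]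
    field_simp
  rw [alphaBase, (alphaBase_summable b j hm).tsum_eq_zero_add, htail, add_zero, zero_add,
    pow_one]
  field_simp

end alphaBase

section guesses

variable {m : ℕ} {b g : ℕ → Fin 2} {x : ℕ → ℝ}

lemma eq_alphaBase_of_forall_lt_eq (hm : 1 < m) (hx0 : x 0 = alphaBase m b 0)
    (hx : ∀ j, x (j + 1) = (m : ℝ) * x j - ((g j : ℕ) : ℝ)) :
    ∀ {n : ℕ}, (∀ j < n, g j = b j) → x n = alphaBase m b n
  | 0, _ => hx0
  | n + 1, hg => by
    rw [hx, eq_alphaBase_of_forall_lt_eq hm hx0 hx fun j hj => hg j (hj.trans n.lt_succ_self),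
      hg n n.lt_succ_self, mul_alphaBase b n hm, add_sub_cancel_left]

lemma half_le_abs_mul_sub_of_half_le_abs {M y d : ℝ} (hM : 3 ≤ M) (hy : 1 / 2 ≤ |y|)
    (hd0 : 0 ≤ d) (hd1 : d ≤ 1) : 1 / 2 ≤ |M * y - d| := by
  have hle : M * |y| - |d| ≤ |M * y - d| := by
    simpa [abs_mul, abs_of_nonneg (by linarith : (0 : ℝ) ≤ M)] using
      abs_sub_abs_le_abs_sub (M * y) d
  rw [abs_of_nonneg hd0] at hle
  nlinarith

lemma half_le_abs_of_exists_lt_ne (hm : 3 ≤ m) (hx0 : x 0 = alphaBase m b 0)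
    (hx : ∀ j, x (j + 1) = (m : ℝ) * x j - ((g j : ℕ) : ℝ)) :
    ∀ {n : ℕ}, (∃ j < n, g j ≠ b j) → 1 / 2 ≤ |x n|
  | n + 1, ⟨j, hj, hne⟩ => by
    have hM : (3 : ℝ) ≤ m := by exact_mod_cast hm
    by_cases hearlier : ∃ i < n, g i ≠ b i
    · rw [hx]
      exact half_le_abs_mul_sub_of_half_le_abs hM (half_le_abs_of_exists_lt_ne hm hx0 hx hearlier)
        (Nat.cast_nonneg _) (natCast_fin_two_le_one _)
    · push Not at hearlier
      obtain rfl : j = n := by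
        by_contra hjn
        exact hne (hearlier j (by omega))
      have hfirst : x (j + 1) = (((b j : ℕ) : ℝ) - ((g j : ℕ) : ℝ)) + alphaBase m b (j + 1) := by
        rw [hx, eq_alphaBase_of_forall_lt_eq (by omega) hx0 hx hearlier,
          mul_alphaBase b j (by omega)]
        ring
      have htail : alphaBase m b (j + 1) ≤ 1 / 2 :=
        (alphaBase_le b (j + 1) (by omega)).trans
          (one_div_le_one_div_of_le two_pos (by linarith))
      have hrev :=
        abs_sub_abs_le_abs_sub (((b j : ℕ) : ℝ) - ((g j : ℕ) : ℝ)) (-alphaBase m b (j + 1))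
      rw [abs_natCast_fin_two_sub_eq_one hne.symm, abs_neg,
        abs_of_nonneg (alphaBase_nonneg b (j + 1)), sub_neg_eq_add, ← hfirst] at hrev
      linarith

end guesses

lemma one_sub_le_one_div_one_add {ε s : ℝ} (hs : 0 ≤ s) (h : (1 - ε) * s ≤ ε) :
    1 - ε ≤ 1 / (1 + s) := by
  rw [le_div_iff₀ (by linarith)]
  linarith

theorem arbitrary_small_error (ε : ℝ) (hε0 : 0 < ε) (hε : ε < 1 / 2) :
    ∃ m : ℕ, 3 ≤ m ∧ ∃ k : ℝ, 0 < k ∧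
      ∀ b : ℕ → Fin 2, ∀ l : ℕ, ∀ g : ℕ → Fin 2, ∀ x : ℕ → ℝ,
        x 0 = alphaBase m b 0 →
        (∀ j : ℕ, x (j + 1) = (m : ℝ) * x j - ((g j : ℕ) : ℝ)) →
        ((∀ j ≤ l, g j = b j) → 1 / (1 + 2 * k * |x (l + 1)|) ≥ 1 - ε) ∧
        ((∃ j ≤ l, g j ≠ b j) → 1 / (1 + 2 * k * |x (l + 1)|) ≤ ε) := by
  have hε1 : ε < 1 := hε.trans one_half_lt_one
  set k := (1 - ε) / ε with hk
  have hk0 : 0 < k := div_pos (sub_pos.2 hε1) hε0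
  obtain ⟨N, hN⟩ := exists_nat_gt (2 * (1 - ε) * k / ε)
  refine ⟨N + 3, by omega, k, hk0, fun b l g x hx0 hx => ⟨fun hright => ?_, fun hwrong => ?_⟩⟩
  · have hxl := eq_alphaBase_of_forall_lt_eq (by omega) hx0 hx
      fun j hj => hright j (Nat.lt_succ_iff.1 hj)
    have hsmall : |x (l + 1)| ≤ 1 / (((N + 3 : ℕ) : ℝ) - 1) := by
      rw [hxl, abs_of_nonneg (alphaBase_nonneg b _)]
      exact alphaBase_le b _ (by omega)
    have hc : 2 * (1 - ε) * k < ε * (((N + 3 : ℕ) : ℝ) - 1) := by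
      rw [div_lt_iff₀ hε0] at hN
      push_cast
      linarith
    refine one_sub_le_one_div_one_add (by positivity) ?_
    calc (1 - ε) * (2 * k * |x (l + 1)|) = 2 * (1 - ε) * k * |x (l + 1)| := by ring
      _ ≤ 2 * (1 - ε) * k * (1 / (((N + 3 : ℕ) : ℝ) - 1)) := by gcongr
      _ ≤ ε := by
        rw [mul_one_div, div_le_iff₀ (by push_cast; linarith)]
        exact hc.le
  · obtain ⟨j, hj, hne⟩ := hwrong
    have hlarge := half_le_abs_of_exists_lt_ne (by omega) hx0 hx ⟨j, Nat.lt_succ_iff.2 hj, hne⟩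
    calc 1 / (1 + 2 * k * |x (l + 1)|) ≤ 1 / (1 + k) :=
          one_div_le_one_div_of_le (by positivity) (by nlinarith)
      _ = ε := by rw [hk]; field_simp; ring
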